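/- Let d ≥ 1, r > 0, and let e₁ be the first standard basis vector of ℝ^d. Then the Lebesgue volume of the intersection of the two closed balls B(0, r) and B(r·e₁, r) (equal radii, centers at distance r) equals c(d) · Vol(B(0, r)), where c(d) = 2 · (Γ(d/2 + 1) / (√π · Γ((d+1)/2))) · ∫₀^{π/3} sin^d(s) ds. -/

import Mathlib

open MeasureTheory Metric Real

/-!
Slice `ℝ^(n+1) = ℝ × ℝ^n` along the first coordinate. The slice of the lens at height
`t ∈ [0, r]` is an `n`-ball of radius `√(r² - max(t², (t - r)²))`, so by Cavalieri the volume
is `ω_n ∫₀^r (r² - max(t², (t - r)²))^(n/2) dt`, with `ω_n` the volume of the unit `n`-ball.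
The integrand is symmetric about `r/2` (the lens is two congruent caps), which turns this into
`2 ω_n ∫_{r/2}^r (r² - t²)^(n/2) dt`, and the substitution `t = r cos s` into
`2 ω_n r^(n+1) ∫₀^{π/3} sin^(n+1) s ds`. Finally `ω_n / ω_(n+1) = Γ((n+1)/2 + 1) / (√π Γ(n/2 + 1))`.
-/

namespace EuclideanSpace

variable {n : ℕ}

def cons (t : ℝ) (y : EuclideanSpace ℝ (Fin n)) : EuclideanSpace ℝ (Fin (n + 1)) :=
  WithLp.toLp 2 (Fin.cons t y.ofLp)

theorem norm_cons_sq (t : ℝ) (y : EuclideanSpace ℝ (Fin n)) :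
    ‖cons t y‖ ^ 2 = t ^ 2 + ‖y‖ ^ 2 := by
  simp [EuclideanSpace.norm_sq_eq, cons, Fin.sum_univ_succ]

theorem cons_sub_single_zero (t r : ℝ) (y : EuclideanSpace ℝ (Fin n)) :
    cons t y - single 0 r = cons (t - r) y := by
  ext i
  cases i using Fin.cases <;> simp [cons, Fin.succ_ne_zero]

theorem measurePreserving_cons :
    MeasurePreserving (fun p : ℝ × EuclideanSpace ℝ (Fin n) ↦ cons p.1 p.2) := by
  rw [Measure.volume_eq_prod]
  have h := (PiLp.volume_preserving_toLp (Fin (n + 1))).comp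
    ((volume_preserving_piFinSuccAbove (fun _ : Fin (n + 1) ↦ ℝ) 0).symm.comp
      ((MeasurePreserving.id volume).prod (PiLp.volume_preserving_ofLp (Fin n))))
  convert h using 1
  ext p i
  simp [cons, MeasurableEquiv.piFinSuccAbove]

theorem volume_eq_lintegral_volume_cons_preimage {s : Set (EuclideanSpace ℝ (Fin (n + 1)))}
    (hs : MeasurableSet s) : volume s = ∫⁻ t, volume (cons t ⁻¹' s) := by
  rw [← measurePreserving_cons.measure_preimage hs.nullMeasurableSet, Measure.volume_eq_prod,
    Measure.prod_apply (measurePreserving_cons.measurable hs)]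
  rfl

theorem volume_closedBall_fin_eq_ofReal {ρ : ℝ} (hρ : 0 ≤ ρ) :
    volume (closedBall (0 : EuclideanSpace ℝ (Fin n)) ρ) =
      ENNReal.ofReal (ρ ^ n * (√π ^ n / Gamma (n / 2 + 1))) := by
  rcases n.eq_zero_or_pos with rfl | hn
  · have : closedBall (0 : EuclideanSpace ℝ (Fin 0)) ρ = Set.univ :=
      Set.eq_univ_of_forall fun x ↦ by simp [Subsingleton.elim x 0, hρ]
    simp [this, volume_euclideanSpace_eq_dirac]
  · have : Nonempty (Fin n) := ⟨⟨0, hn⟩⟩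
    rw [volume_closedBall, Fintype.card_fin, ENNReal.ofReal_mul (by positivity),
      ENNReal.ofReal_pow hρ]

theorem volume_setOf_norm_sq_le (c : ℝ) :
    volume {y : EuclideanSpace ℝ (Fin n) | ‖y‖ ^ 2 ≤ c} =
      (Set.Ici 0).indicator (fun c ↦ ENNReal.ofReal (√c ^ n * (√π ^ n / Gamma (n / 2 + 1)))) c := by
  by_cases hc : 0 ≤ c
  · have : {y : EuclideanSpace ℝ (Fin n) | ‖y‖ ^ 2 ≤ c} = closedBall 0 √c := by
      ext y
      rw [Set.mem_ofPred_eq, mem_closedBall_zero_iff, Real.le_sqrt (norm_nonneg y) hc]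
    rw [this, volume_closedBall_fin_eq_ofReal (sqrt_nonneg c),
      Set.indicator_of_mem (Set.mem_Ici.mpr hc)]
  · have : {y : EuclideanSpace ℝ (Fin n) | ‖y‖ ^ 2 ≤ c} = ∅ :=
      Set.eq_empty_of_forall_notMem fun y hy ↦ hc ((sq_nonneg _).trans hy)
    rw [this, measure_empty, Set.indicator_of_notMem (mt Set.mem_Ici.mp hc)]

theorem cons_preimage_closedBall_inter_closedBall_single {r : ℝ} (hr : 0 ≤ r) (t : ℝ) :
    cons t ⁻¹' (closedBall 0 r ∩ closedBall (single 0 r) r) =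
      {y : EuclideanSpace ℝ (Fin n) | ‖y‖ ^ 2 ≤ r ^ 2 - max (t ^ 2) ((t - r) ^ 2)} := by
  ext y
  simp only [Set.mem_preimage, Set.mem_inter_iff, mem_closedBall, dist_eq_norm, sub_zero,
    cons_sub_single_zero, Set.mem_ofPred_eq, ← sq_le_sq₀ (norm_nonneg _) hr, norm_cons_sq]
  rw [le_sub_comm, max_le_iff]
  constructor <;> rintro ⟨h1, h2⟩ <;> constructor <;> linarith

theorem volume_closedBall_inter_closedBall_single {r : ℝ} (hr : 0 ≤ r) :
    volume (closedBall (0 : EuclideanSpace ℝ (Fin (n + 1))) r ∩ closedBall (single 0 r) r) =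
      ENNReal.ofReal (∫ t in 0..r,
        √(r ^ 2 - max (t ^ 2) ((t - r) ^ 2)) ^ n * (√π ^ n / Gamma (n / 2 + 1))) := by
  have hslice (t : ℝ) : volume (cons (n := n) t ⁻¹' (closedBall 0 r ∩ closedBall (single 0 r) r)) =
      (Set.Icc 0 r).indicator (fun t ↦ ENNReal.ofReal
        (√(r ^ 2 - max (t ^ 2) ((t - r) ^ 2)) ^ n * (√π ^ n / Gamma (n / 2 + 1)))) t := by
    have hpos : 0 ≤ r ^ 2 - max (t ^ 2) ((t - r) ^ 2) ↔ t ∈ Set.Icc 0 r := by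
      rw [sub_nonneg, max_le_iff, Set.mem_Icc]
      constructor <;> rintro ⟨h1, h2⟩ <;> constructor <;> nlinarith
    rw [cons_preimage_closedBall_inter_closedBall_single hr, volume_setOf_norm_sq_le,
      Set.indicator_apply, Set.indicator_apply]
    simp only [Set.mem_Ici, hpos]
  rw [volume_eq_lintegral_volume_cons_preimage (measurableSet_closedBall.inter
      measurableSet_closedBall), lintegral_congr hslice, lintegral_indicator measurableSet_Icc,
    ← ofReal_integral_eq_lintegral_ofReal
      (by fun_prop : Continuous _).continuousOn.integrableOn_Icc
      (.of_forall fun t ↦ by positivity),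
    integral_Icc_eq_integral_Ioc, ← intervalIntegral.integral_of_le hr]

end EuclideanSpace

namespace intervalIntegral

theorem integral_comp_max_sq_sub_sq {f : ℝ → ℝ} (hf : Continuous f) (r : ℝ) :
    ∫ t in 0..r, f (max (t ^ 2) ((t - r) ^ 2)) = 2 * ∫ t in r / 2..r, f (t ^ 2) := by
  have hint (a b : ℝ) : IntervalIntegrable (fun t ↦ f (max (t ^ 2) ((t - r) ^ 2))) volume a b :=
    (by fun_prop : Continuous _).intervalIntegrable a b
  have hright : ∫ t in r / 2..r, f (max (t ^ 2) ((t - r) ^ 2)) = ∫ t in r / 2..r, f (t ^ 2) := by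
    refine integral_congr fun t ht ↦ ?_
    rw [Set.mem_uIcc] at ht
    rw [max_eq_left (by rcases ht with ⟨h1, h2⟩ | ⟨h1, h2⟩ <;> nlinarith)]
  have hleft : ∫ t in 0..r / 2, f (max (t ^ 2) ((t - r) ^ 2)) = ∫ t in r / 2..r, f (t ^ 2) := by
    have hreflect : ∀ t ∈ Set.uIcc 0 (r / 2),
        f (max (t ^ 2) ((t - r) ^ 2)) = (fun u ↦ f (u ^ 2)) (r - t) := fun t ht ↦ by
      rw [Set.mem_uIcc] at ht
      rw [max_eq_right (by rcases ht with ⟨h1, h2⟩ | ⟨h1, h2⟩ <;> nlinarith), ← neg_sub, neg_sq]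
    rw [integral_congr hreflect,
      integral_comp_sub_left (fun u ↦ f (u ^ 2)),
      sub_zero, sub_half]
  rw [← integral_add_adjacent_intervals (hint 0 (r / 2)) (hint (r / 2) r),
    hleft, hright, two_mul]

theorem integral_sqrt_sq_sub_sq_pow (n : ℕ) {r b : ℝ} (hr : 0 ≤ r) (hb₀ : 0 ≤ b)
    (hbπ : b ≤ π) :
    ∫ t in r * cos b..r, √(r ^ 2 - t ^ 2) ^ n = r ^ (n + 1) * ∫ s in 0..b, sin s ^ (n + 1) := by
  have hderiv : ∀ s ∈ Set.uIcc b 0, HasDerivAt (fun s ↦ r * cos s) (-(r * sin s)) s :=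
    fun s _ ↦ by simpa [mul_neg] using (hasDerivAt_cos s).const_mul r
  have hsubst := integral_comp_mul_deriv hderiv (by fun_prop)
    (by fun_prop : Continuous fun t ↦ √(r ^ 2 - t ^ 2) ^ n)
  rw [cos_zero, mul_one] at hsubst
  rw [← hsubst, integral_symm, ← integral_neg,
    ← integral_const_mul]
  refine integral_congr fun s hs ↦ ?_
  rw [Set.uIcc_of_le hb₀] at hs
  have hsin : 0 ≤ r * sin s := mul_nonneg hr (sin_nonneg_of_nonneg_of_le_pi hs.1 (hs.2.trans hbπ))
  have hpyth : r ^ 2 - (r * cos s) ^ 2 = (r * sin s) ^ 2 := by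
    linear_combination -r ^ 2 * sin_sq_add_cos_sq s
  simp only [Function.comp_apply, hpyth, sqrt_sq hsin]
  ring

end intervalIntegral

theorem volume_inter_balls_equal_radii (d : ℕ) (hd : 1 ≤ d) (r : ℝ) (hr : 0 < r) :
    volume (closedBall (0 : EuclideanSpace ℝ (Fin d)) r ∩
        closedBall (EuclideanSpace.single (⟨0, hd⟩ : Fin d) r) r) =
      ENNReal.ofReal
          (2 * (Real.Gamma ((d : ℝ) / 2 + 1) / (Real.sqrt π * Real.Gamma (((d : ℝ) + 1) / 2))) *
            ∫ s in (0 : ℝ)..(π / 3), Real.sin s ^ d) *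
        volume (closedBall (0 : EuclideanSpace ℝ (Fin d)) r) := by
  obtain ⟨n, rfl⟩ : ∃ n, d = n + 1 := ⟨d - 1, by omega⟩
  have hr2 : r / 2 = r * cos (π / 3) := by rw [cos_pi_div_three]; ring
  rw [Fin.mk_zero, EuclideanSpace.volume_closedBall_inter_closedBall_single hr.le,
    intervalIntegral.integral_mul_const,
    intervalIntegral.integral_comp_max_sq_sub_sq (f := fun u ↦ √(r ^ 2 - u) ^ n) (by fun_prop),
    hr2, intervalIntegral.integral_sqrt_sq_sub_sq_pow n hr.le (by positivity)
      (by linarith [pi_pos]),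
    EuclideanSpace.volume_closedBall_fin_eq_ofReal hr.le, ← ENNReal.ofReal_mul' (by positivity)]
  congr 1
  have hcast : (((n + 1 : ℕ) : ℝ) + 1) / 2 = (n : ℝ) / 2 + 1 := by push_cast; ring
  rw [hcast]
  field_simp
  ring
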